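/- Let n ≥ 2 and k ≥ 1 be natural numbers and let p : EuclideanSpace ℝ (Fin n) → ℝ be (the evaluation of) a homogeneous polynomial of degree k in the coordinates which is harmonic on all of EuclideanSpace ℝ (Fin n). Then the function H(x) = (1 − ‖x‖^(2−n−2k)) · p(x) is harmonic on EuclideanSpace ℝ (Fin n) \ {0} and vanishes at every point x with ‖x‖ = 1. -/

import Mathlib

/-! With `r = ‖x‖` and `a = 2 - n - 2k`, the product rule gives
`Δ(r^a p) = Δ(r^a) p + 2 ∇(r^a) · ∇p + r^a Δp`, where `Δp = 0`, `Δ(r^a) = a (a + n - 2) r^(a-2)`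
and, by Euler's identity `x · ∇p = k p` for the homogeneous `p`, `∇(r^a) · ∇p = a k r^(a-2) p`.
Hence `Δ(r^a p) = a (a + n - 2 + 2k) r^(a-2) p = 0`. On the unit sphere `1 - r^a` vanishes. -/

/-- `f` is harmonic on the open set `U`: it is `C²` on `U` and the sum of its
second partial derivatives in the standard coordinate directions vanishes on `U`. -/
def IsHarmonicOn {n : ℕ} (f : EuclideanSpace ℝ (Fin n) → ℝ)
    (U : Set (EuclideanSpace ℝ (Fin n))) : Prop :=
  ContDiffOn ℝ 2 f U ∧
  ∀ x ∈ U, ∑ i : Fin n,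
    fderiv ℝ (fun y => fderiv ℝ f y (EuclideanSpace.single i 1)) x
      (EuclideanSpace.single i 1) = 0

open Filter Topology

section Calculus

variable {E : Type*} [NormedAddCommGroup E] [NormedSpace ℝ E]

theorem fderiv_fderiv_mul_apply {f g : E → ℝ} {x : E} (v : E)
    (hf : ContDiffAt ℝ 2 f x) (hg : ContDiffAt ℝ 2 g x) :
    fderiv ℝ (fun y => fderiv ℝ (fun z => f z * g z) y v) x v =
      fderiv ℝ (fun y => fderiv ℝ f y v) x v * g x + 2 * (fderiv ℝ f x v * fderiv ℝ g x v) +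
        f x * fderiv ℝ (fun y => fderiv ℝ g y v) x v := by
  have hfirst : (fun y => fderiv ℝ (fun z => f z * g z) y v) =ᶠ[𝓝 x]
      fun y => fderiv ℝ f y v * g y + f y * fderiv ℝ g y v := by
    filter_upwards [hf.eventually (by simp), hg.eventually (by simp)] with y hfy hgy
    rw [fderiv_fun_mul (hfy.differentiableAt (by simp)) (hgy.differentiableAt (by simp))]
    simp only [add_apply, smul_apply, smul_eq_mul]
    ring
  have hf' : DifferentiableAt ℝ (fun y => fderiv ℝ f y v) x :=
    ((hf.fderiv_right (m := 1) le_rfl).differentiableAt one_ne_zero).clm_apply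
      (differentiableAt_const v)
  have hg' : DifferentiableAt ℝ (fun y => fderiv ℝ g y v) x :=
    ((hg.fderiv_right (m := 1) le_rfl).differentiableAt one_ne_zero).clm_apply
      (differentiableAt_const v)
  have hfd := hf.differentiableAt (by simp)
  have hgd := hg.differentiableAt (by simp)
  rw [hfirst.fderiv_eq, fderiv_fun_add (hf'.fun_mul hgd) (hfd.fun_mul hg'),
    fderiv_fun_mul hf' hgd, fderiv_fun_mul hfd hg']
  simp only [add_apply, smul_apply, smul_eq_mul]
  ring

theorem fderiv_apply_self_of_homogeneous {f : E → ℝ} {f' : E →L[ℝ] ℝ} {x : E} {k : ℕ}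
    (hf : HasFDerivAt f f' x) (hhom : ∀ t > (0 : ℝ), f (t • x) = t ^ k * f x) :
    f' x = k * f x := by
  have hline : HasDerivAt (fun t : ℝ => f (t • x)) (f' x) 1 := by
    have hsmul : HasDerivAt (fun t : ℝ => t • x) x 1 := by
      simpa using (hasDerivAt_id (1 : ℝ)).smul_const x
    exact hf.comp_hasDerivAt_of_eq (1 : ℝ) hsmul (one_smul ℝ x).symm
  have hpow : HasDerivAt (fun t : ℝ => f (t • x)) (k * f x) 1 := by
    have hcongr : (fun t : ℝ => t ^ k * f x) =ᶠ[𝓝 1] fun t => f (t • x) := by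
      filter_upwards [lt_mem_nhds one_pos] with t ht using (hhom t ht).symm
    simpa using ((hasDerivAt_pow k (1 : ℝ)).mul_const (f x)).congr_of_eventuallyEq hcongr.symm
  exact hline.unique hpow

end Calculus

section NormRpow

variable {E : Type*} [NormedAddCommGroup E] [InnerProductSpace ℝ E]

theorem hasFDerivAt_norm_rpow_of_ne_zero (a : ℝ) {x : E} (hx : x ≠ 0) :
    HasFDerivAt (fun y : E => ‖y‖ ^ a) ((a * ‖x‖ ^ (a - 2)) • innerSL ℝ x) x := by
  convert! ((hasStrictFDerivAt_norm_sq x).rpow_const (p := a / 2) (by simp [hx])).hasFDerivAt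
    using 1
  · funext y
    rw [← Real.rpow_natCast_mul (norm_nonneg y)]
    ring_nf
  · rw [← Real.rpow_natCast_mul (norm_nonneg x), ← Nat.cast_smul_eq_nsmul ℝ, smul_smul]
    ring_nf

theorem fderiv_norm_rpow_apply (a : ℝ) {x : E} (hx : x ≠ 0) (v : E) :
    fderiv ℝ (fun y : E => ‖y‖ ^ a) x v = a * ‖x‖ ^ (a - 2) * inner ℝ x v := by
  simp [(hasFDerivAt_norm_rpow_of_ne_zero a hx).fderiv]

theorem fderiv_fderiv_norm_rpow_apply (a : ℝ) {x : E} (hx : x ≠ 0) (v : E) :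
    fderiv ℝ (fun y => fderiv ℝ (fun z : E => ‖z‖ ^ a) y v) x v =
      a * (a - 2) * ‖x‖ ^ (a - 4) * inner ℝ x v ^ 2 + a * ‖x‖ ^ (a - 2) * ‖v‖ ^ 2 := by
  have hfirst : (fun y => fderiv ℝ (fun z : E => ‖z‖ ^ a) y v) =ᶠ[𝓝 x]
      fun y => a * ‖y‖ ^ (a - 2) * inner ℝ y v := by
    filter_upwards [isOpen_ne.mem_nhds hx] with y hy using fderiv_norm_rpow_apply a hy v
  have hinner : HasFDerivAt (fun y : E => inner ℝ y v) (innerSL ℝ v) x := by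
    simpa [real_inner_comm] using (innerSL ℝ v).hasFDerivAt (x := x)
  rw [hfirst.fderiv_eq,
    (((hasFDerivAt_norm_rpow_of_ne_zero (a - 2) hx).const_mul a).fun_mul hinner).fderiv]
  simp only [add_apply, smul_apply, smul_eq_mul,
    innerSL_apply_apply, real_inner_self_eq_norm_sq, real_inner_comm v x]
  ring_nf

end NormRpow

theorem MvPolynomial.IsHomogeneous.eval_smul {R σ : Type*} [CommSemiring R]
    {φ : MvPolynomial σ R} {n : ℕ} (hφ : φ.IsHomogeneous n) (r : R) (x : σ → R) :
    MvPolynomial.eval (r • x) φ = r ^ n * MvPolynomial.eval x φ := by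
  simp only [MvPolynomial.eval_eq, Finset.mul_sum, Pi.smul_apply, smul_eq_mul, mul_pow,
    Finset.prod_mul_distrib, Finset.prod_pow_eq_pow_sum]
  refine Finset.sum_congr rfl fun d hd => ?_
  rw [hφ.degree_eq_sum_deg_support hd]
  ring

section Coordinates

variable {ι : Type*} [Fintype ι] [DecidableEq ι]

noncomputable def coordLaplacian (f : EuclideanSpace ℝ ι → ℝ) (x : EuclideanSpace ℝ ι) : ℝ :=
  ∑ i, fderiv ℝ (fun y => fderiv ℝ f y (EuclideanSpace.single i 1)) x
    (EuclideanSpace.single i 1)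

theorem sum_mul_apply_single (L : EuclideanSpace ℝ ι →L[ℝ] ℝ) (x : EuclideanSpace ℝ ι) :
    ∑ i, x i * L (EuclideanSpace.single i 1) = L x := by
  conv_rhs => rw [← (EuclideanSpace.basisFun ι ℝ).sum_repr x]
  simp [map_sum, map_smul]

theorem coordLaplacian_mul {f g : EuclideanSpace ℝ ι → ℝ} {x : EuclideanSpace ℝ ι}
    (hf : ContDiffAt ℝ 2 f x) (hg : ContDiffAt ℝ 2 g x) :
    coordLaplacian (fun y => f y * g y) x =
      coordLaplacian f x * g x +
        2 * ∑ i, fderiv ℝ f x (EuclideanSpace.single i 1) *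
          fderiv ℝ g x (EuclideanSpace.single i 1) +
          f x * coordLaplacian g x := by
  simp only [coordLaplacian, fderiv_fderiv_mul_apply _ hf hg, Finset.sum_add_distrib,
    Finset.sum_mul, Finset.mul_sum]

theorem coordLaplacian_const_sub (c : ℝ) (f : EuclideanSpace ℝ ι → ℝ) (x : EuclideanSpace ℝ ι) :
    coordLaplacian (fun y => c - f y) x = -coordLaplacian f x := by
  simp only [coordLaplacian, fderiv_const_sub, neg_apply, fderiv_fun_neg,
    Finset.sum_neg_distrib]

theorem coordLaplacian_norm_rpow (a : ℝ) {x : EuclideanSpace ℝ ι} (hx : x ≠ 0) :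
    coordLaplacian (fun y => ‖y‖ ^ a) x = a * (a + Fintype.card ι - 2) * ‖x‖ ^ (a - 2) := by
  have hpow : ‖x‖ ^ (a - 4) * ‖x‖ ^ 2 = ‖x‖ ^ (a - 2) := by
    rw [← Real.rpow_natCast, ← Real.rpow_add (norm_pos_iff.mpr hx)]
    norm_num
    ring_nf
  simp only [coordLaplacian, fderiv_fderiv_norm_rpow_apply a hx,
    EuclideanSpace.inner_single_right, Real.ringHom_apply, one_mul, PiLp.norm_single, norm_one,
    one_pow, mul_one, Finset.sum_add_distrib, ← Finset.mul_sum, ← EuclideanSpace.real_norm_sq_eq,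
    Finset.sum_const, Finset.card_univ, nsmul_eq_mul]
  linear_combination (a * (a - 2)) * hpow

theorem sum_fderiv_norm_rpow_mul_fderiv (a : ℝ) {x : EuclideanSpace ℝ ι} (hx : x ≠ 0)
    (g : EuclideanSpace ℝ ι → ℝ) :
    ∑ i, fderiv ℝ (fun y => ‖y‖ ^ a) x (EuclideanSpace.single i 1) *
        fderiv ℝ g x (EuclideanSpace.single i 1) = a * ‖x‖ ^ (a - 2) * fderiv ℝ g x x := by
  simp only [fderiv_norm_rpow_apply a hx, EuclideanSpace.inner_single_right, mul_assoc,
    ← Finset.mul_sum, ← sum_mul_apply_single (fderiv ℝ g x) x]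
  simp

end Coordinates

theorem statement16_general (n k : ℕ)
    (p : EuclideanSpace ℝ (Fin n) → ℝ)
    (hpoly : ∃ P : MvPolynomial (Fin n) ℝ, P.IsHomogeneous k ∧
      ∀ x : EuclideanSpace ℝ (Fin n), p x = MvPolynomial.eval (fun i => x i) P)
    (hharm : IsHarmonicOn p Set.univ) :
    IsHarmonicOn (fun x => (1 - ‖x‖ ^ ((2 : ℝ) - n - 2 * k)) * p x)
      {x : EuclideanSpace ℝ (Fin n) | x ≠ 0} ∧
    ∀ x : EuclideanSpace ℝ (Fin n), ‖x‖ = 1 →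
      (1 - ‖x‖ ^ ((2 : ℝ) - n - 2 * k)) * p x = 0 := by
  obtain ⟨P, hP, hpP⟩ := hpoly
  have hhom (x : EuclideanSpace ℝ (Fin n)) (t : ℝ) : p (t • x) = t ^ k * p x := by
    rw [hpP, hpP, ← hP.eval_smul]
    rfl
  have hp : ContDiff ℝ 2 p := contDiffOn_univ.mp hharm.1
  set a : ℝ := 2 - n - 2 * k with ha
  have hradial {x : EuclideanSpace ℝ (Fin n)} (hx : x ≠ 0) :
      ContDiffAt ℝ 2 (fun y => 1 - ‖y‖ ^ a) x :=
    contDiffAt_const.sub ((contDiffAt_norm ℝ hx).rpow_const_of_ne (norm_ne_zero_iff.mpr hx))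
  refine ⟨⟨fun x hx => ((hradial hx).mul hp.contDiffAt).contDiffWithinAt, fun x hx => ?_⟩,
    fun x hx => by simp [hx]⟩
  have hEuler : fderiv ℝ p x x = k * p x :=
    fderiv_apply_self_of_homogeneous (hp.differentiable (by simp) x).hasFDerivAt
      fun t _ => hhom x t
  change coordLaplacian (fun y => (1 - ‖y‖ ^ a) * p y) x = 0
  rw [coordLaplacian_mul (hradial hx) hp.contDiffAt, coordLaplacian_const_sub,
    coordLaplacian_norm_rpow a hx, show coordLaplacian p x = 0 from hharm.2 x trivial]
  simp only [fderiv_const_sub, neg_apply, neg_mul, Finset.sum_neg_distrib,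
    sum_fderiv_norm_rpow_mul_fderiv a hx, hEuler, Fintype.card_fin]
  linear_combination (-a * ‖x‖ ^ (a - 2) * p x) * ha

/-- for a homogeneous harmonic polynomial `p` of degree `k ≥ 1` on `ℝⁿ`
(`n ≥ 2`), the function `H(x) = (1 − ‖x‖^(2−n−2k)) p(x)` (difference of `p` and its Kelvin
transform) is harmonic away from the origin and vanishes on the unit sphere. -/
theorem statement16 (n k : ℕ) (hn : 2 ≤ n) (hk : 1 ≤ k)
    (p : EuclideanSpace ℝ (Fin n) → ℝ)
    (hpoly : ∃ P : MvPolynomial (Fin n) ℝ, P.IsHomogeneous k ∧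
      ∀ x : EuclideanSpace ℝ (Fin n), p x = MvPolynomial.eval (fun i => x i) P)
    (hharm : IsHarmonicOn p Set.univ) :
    IsHarmonicOn (fun x => (1 - ‖x‖ ^ ((2 : ℝ) - n - 2 * k)) * p x)
      {x : EuclideanSpace ℝ (Fin n) | x ≠ 0} ∧
    ∀ x : EuclideanSpace ℝ (Fin n), ‖x‖ = 1 →
      (1 - ‖x‖ ^ ((2 : ℝ) - n - 2 * k)) * p x = 0 :=
  statement16_general n k p hpoly hharm
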